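/- If a nonzero right R-module M has couniserial dimension at most ω (the first infinite ordinal), then M has an indecomposable decomposition, i.e., M is a direct sum of indecomposable submodules. -/

import Mathlib

universe u v w

/-- A module is *uniform* if it is nonzero and any two nonzero submodules intersect
nontrivially. -/
def IsUniformModule (R : Type u) [Ring R] (M : Type v) [AddCommGroup M] [Module R M] : Prop :=
  Nontrivial M ∧ ∀ N₁ N₂ : Submodule R M, N₁ ≠ ⊥ → N₂ ≠ ⊥ → N₁ ⊓ N₂ ≠ ⊥

/-- The classes `ζ_α`, defined by transfinite induction: `ζ_1` is the class of uniform
modules, and for `α > 1`, `M ∈ ζ_α` iff every nonzero submodule `N` of `M` with `N ≇ M`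
lies in `ζ_β` for some `β < α`. -/
def ModuleZeta (R : Type u) [Ring R] (α : Ordinal.{v}) (M : Type v) [AddCommGroup M]
    [Module R M] : Prop :=
  (α = 1 ∧ IsUniformModule R M) ∨
    (1 < α ∧ ∀ N : Submodule R M, N ≠ ⊥ → ¬ Nonempty (N ≃ₗ[R] M) →
      ∃ β, ∃ _ : β < α, ModuleZeta R β N)
termination_by α

/-- A module has couniserial dimension iff it lies in `ζ_α` for some ordinal `α`. -/
def HasCUDim (R : Type u) [Ring R] (M : Type v) [AddCommGroup M] [Module R M] : Prop :=
  ∃ α : Ordinal.{v}, ModuleZeta R α M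

open Classical in
/-- The couniserial dimension of a module: the least `α` with `M ∈ ζ_α`, with the
convention that the zero module has couniserial dimension `0`. -/
noncomputable def cuDim (R : Type u) [Ring R] (M : Type v) [AddCommGroup M] [Module R M] :
    Ordinal.{v} :=
  if Subsingleton M then 0 else sInf {α | ModuleZeta R α M}

/-- A submodule is *essential* if it meets every nonzero submodule nontrivially. -/
def IsEssentialSubmodule (R : Type u) [Ring R] {M : Type v} [AddCommGroup M] [Module R M]
    (N : Submodule R M) : Prop :=
  ∀ K : Submodule R M, K ≠ ⊥ → N ⊓ K ≠ ⊥

/-- A module is *indecomposable* if it is nonzero and is not an (internal) direct sum of two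
nonzero submodules. -/
def IsIndecomposableModule (R : Type u) [Ring R] (M : Type v) [AddCommGroup M]
    [Module R M] : Prop :=
  Nontrivial M ∧ ∀ A B : Submodule R M, IsCompl A B → A = ⊥ ∨ B = ⊥

/-- A module is *coHopfian* if it is not isomorphic to a proper submodule of itself. -/
def IsCoHopfianModule (R : Type u) [Ring R] (M : Type v) [AddCommGroup M] [Module R M] : Prop :=
  ∀ N : Submodule R M, Nonempty (M ≃ₗ[R] N) → N = ⊤

/-- A module is *fully coHopfian* if every submodule is coHopfian. -/
def IsFullyCoHopfianModule (R : Type u) [Ring R] (M : Type v) [AddCommGroup M]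
    [Module R M] : Prop :=
  ∀ N : Submodule R M, IsCoHopfianModule R N

/-- A module `N` has the *cancellation property* if `N ⊕ A ≅ N ⊕ B` implies `A ≅ B`. -/
def HasCancellation (R : Type u) [Ring R] (N : Type v) [AddCommGroup N] [Module R N] : Prop :=
  ∀ (A B : Type v) [AddCommGroup A] [Module R A] [AddCommGroup B] [Module R B],
    Nonempty ((N × A) ≃ₗ[R] (N × B)) → Nonempty (A ≃ₗ[R] B)

/-- A module is *Dedekind finite* if it is not isomorphic to a proper direct summand of
itself. -/
def IsDedekindFiniteModule (R : Type u) [Ring R] (M : Type v) [AddCommGroup M]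
    [Module R M] : Prop :=
  ∀ A B : Submodule R M, IsCompl A B → Nonempty (M ≃ₗ[R] A) → B = ⊥

/-- A ring is *semiprime* if it has no nonzero nilpotent two-sided ideal; equivalently,
`a R a = 0` implies `a = 0`. -/
def IsSemiprimeRing (R : Type u) [Ring R] : Prop :=
  ∀ a : R, (∀ x : R, a * x * a = 0) → a = 0

/-- An ideal is an *annihilator ideal* if it is the annihilator of a subset of the ring. -/
def IsAnnihilatorIdeal (R : Type u) [Ring R] (I : Ideal R) : Prop :=
  ∃ S : Set R, (I : Set R) = {x : R | ∀ s ∈ S, x * s = 0}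

/-- A module has *uniform dimension `n`* if it contains `n` independent uniform submodules
whose direct sum is essential. -/
def HasFiniteUniformDim (R : Type u) [Ring R] (M : Type v) [AddCommGroup M] [Module R M]
    (n : ℕ) : Prop :=
  ∃ U : Fin n → Submodule R M, iSupIndep U ∧ (∀ i, IsUniformModule R (U i)) ∧
    IsEssentialSubmodule R (⨆ i, U i)

/-- A ring is *Goldie* if it has the ascending chain condition on annihilator ideals and
finite uniform dimension as a module over itself. -/
def IsGoldieRing (R : Type u) [Ring R] : Prop :=
  (∀ f : ℕ → Ideal R, (∀ n, IsAnnihilatorIdeal R (f n)) → Monotone f →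
      ∃ n, ∀ k, n ≤ k → f k = f n) ∧
    ∃ n : ℕ, HasFiniteUniformDim R R n

/-!
Modules of finite couniserial dimension have finite uniform dimension, i.e. contain no infinite
direct sum of nonzero submodules. Otherwise there are independent uniform submodules
`u 0, u 1, …`; along the partial sums `F j` the couniserial dimension strictly increases unless
`F j ≅ F (j + 1) = F j ⊕ u (j + 1)`; being bounded by a natural number, it stops at such a `j`.
The module `F (j + 1)`, isomorphic to a proper summand of itself, contains an infinite direct
sum; by induction it therefore cannot have smaller couniserial dimension than the whole module,
so it is isomorphic to it. But then the module is a sum of `j + 2` uniform submodules and cannot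
contain `j + 3` independent ones (Goldie's counting argument, by passing to quotients).

For `c.u.dim M ≤ ω` take, by Zorn, a maximal independent family of uniform submodules; its sum
`E` is essential. If `E ≅ M`, then `M` is a direct sum of uniform modules. Otherwise
`c.u.dim E < ω`, so `E`, and with it `M`, has finite uniform dimension; then `M` is a finite
direct sum of indecomposables, since proper direct summands cannot descend forever.
-/

open Submodule

section Essential

variable {α : Type*} [Lattice α] [OrderBot α]

-- `a ⊓ b` is essential in `b`; `a` itself need not lie below `b`.
def IsEssentialIn (a b : α) : Prop :=
  ∀ c ≤ b, Disjoint a c → c = ⊥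

theorem IsEssentialIn.mono_left {a a' b : α} (h : IsEssentialIn a b) (ha : a ≤ a') :
    IsEssentialIn a' b :=
  fun c hc hd => h c hc (hd.mono_left ha)

theorem IsEssentialIn.trans {a b c : α} (hab : IsEssentialIn a b) (hbc : IsEssentialIn b c) :
    IsEssentialIn a c :=
  fun d hd had => hbc d hd (disjoint_iff.2 (hab _ inf_le_left (had.mono_right inf_le_right)))

theorem IsEssentialIn.inf_right {a b : α} (h : IsEssentialIn a b) : IsEssentialIn (a ⊓ b) b :=
  fun c hc hd => h c hc (by rwa [disjoint_iff, inf_assoc, inf_eq_right.2 hc, ← disjoint_iff] at hd)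

variable [IsModularLattice α]

theorem IsEssentialIn.sup_right {a b c : α} (h : IsEssentialIn a b) (hbc : Disjoint b c) :
    IsEssentialIn (a ⊔ c) (b ⊔ c) := by
  intro d hd had
  have hcd : (c ⊔ d) ⊓ (a ⊔ c) = c := by
    rw [sup_inf_assoc_of_le d le_sup_right, had.symm.eq_bot, sup_bot_eq]
  have he : b ⊓ (c ⊔ d) = ⊥ := by
    rw [inf_comm]
    refine h _ inf_le_right (disjoint_iff_inf_le.2 ?_)
    calc a ⊓ ((c ⊔ d) ⊓ b) ≤ (c ⊔ d) ⊓ (a ⊔ c) ⊓ b :=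
          le_inf (le_inf (inf_le_right.trans inf_le_left) (inf_le_left.trans le_sup_left))
            (inf_le_right.trans inf_le_right)
      _ = ⊥ := by rw [hcd, hbc.symm.eq_bot]
  have hdc : d ≤ c := by
    calc d ≤ c ⊔ d := le_sup_right
      _ = (c ⊔ b) ⊓ (c ⊔ d) :=
          (inf_eq_right.2 (sup_le le_sup_left (hd.trans_eq (sup_comm b c)))).symm
      _ = c := by rw [sup_inf_assoc_of_le b le_sup_left, he, sup_bot_eq]
  exact had.symm.eq_bot_of_le (hdc.trans le_sup_right)

theorem IsEssentialIn.sup {a b c : α} (hb : IsEssentialIn a b) (hc : IsEssentialIn a c)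
    (hbc : Disjoint b c) : IsEssentialIn a (b ⊔ c) := by
  have h₁ : IsEssentialIn (a ⊓ b ⊔ c) (b ⊔ c) := hb.inf_right.sup_right hbc
  have h₂ : IsEssentialIn (a ⊓ c ⊔ a ⊓ b) (c ⊔ a ⊓ b) :=
    hc.inf_right.sup_right (hbc.symm.mono_right inf_le_right)
  rw [sup_comm c] at h₂
  exact (h₂.trans h₁).mono_left (sup_le inf_le_left inf_le_left)

end Essential

section Independence

variable {α : Type*} [CompleteLattice α] [IsModularLattice α]

theorem sSupIndep.union {S T : Set α} (hS : sSupIndep S) (hT : sSupIndep T)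
    (hST : Disjoint (sSup S) (sSup T)) : sSupIndep (S ∪ T) := by
  have key : ∀ {S T : Set α}, sSupIndep S → Disjoint (sSup S) (sSup T) →
      ∀ a ∈ S, Disjoint a (sSup ((S ∪ T) \ {a})) := by
    intro S T hS hST a ha
    refine ((hS ha).disjoint_sup_right_of_disjoint_sup_left (c := sSup T) ?_).mono_right ?_
    · exact hST.mono_left (sup_le (le_sSup ha) (sSup_le_sSup Set.sdiff_subset))
    · rw [Set.union_sdiff_distrib, sSup_union]
      exact sup_le_sup_left (sSup_le_sSup Set.sdiff_subset) _
  rintro a (ha | ha)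
  · exact key hS hST a ha
  · rw [Set.union_comm]
    exact key hT hST.symm a ha

theorem iSupIndep_of_disjoint_of_antitone {C A : ℕ → α} (hA : Antitone A)
    (hCA : ∀ n, C n ≤ A n) (hd : ∀ n, Disjoint (C n) (A (n + 1))) : iSupIndep C := by
  have key : ∀ n, Disjoint (⨆ i < n, C i) (A n) := by
    intro n
    induction n with
    | zero => simp
    | succ n ih =>
      rw [Nat.iSup_lt_succ]
      exact (hd n).disjoint_sup_left_of_disjoint_sup_right
        (ih.mono_right (sup_le (hCA n) (hA n.le_succ)))
  intro i
  refine ((key i).symm.mono_left (hCA i) |>.disjoint_sup_right_of_disjoint_sup_left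
    (c := A (i + 1)) ?_).mono_right ?_
  · rw [sup_comm, ← Nat.iSup_lt_succ]
    exact key (i + 1)
  · refine iSup₂_le fun j hj => ?_
    rcases lt_or_gt_of_ne hj with hji | hij
    · exact le_sup_of_le_left (le_biSup C hji)
    · exact le_sup_of_le_right ((hCA j).trans (hA hij))

end Independence

section Transport

variable {R : Type u} [Ring R] {X Y : Type v} [AddCommGroup X] [Module R X]
  [AddCommGroup Y] [Module R Y]

theorem Submodule.map_ne_bot_of_injective {f : X →ₗ[R] Y} (hf : Function.Injective f)
    {A : Submodule R X} (hA : A ≠ ⊥) : A.map f ≠ ⊥ := by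
  simpa using (map_injective_of_injective hf).ne hA

theorem Submodule.comap_subtype_ne_bot {A U : Submodule R X} (hAU : A ≤ U) (hA : A ≠ ⊥) :
    A.comap U.subtype ≠ ⊥ :=
  fun h => hA (by simpa [h, inf_eq_right.2 hAU] using (map_comap_subtype U A).symm)

theorem IsUniformModule.of_equiv (e : X ≃ₗ[R] Y) (h : IsUniformModule R X) :
    IsUniformModule R Y := by
  obtain ⟨_, h⟩ := h
  refine ⟨e.toEquiv.symm.nontrivial, fun N₁ N₂ h₁ h₂ h₁₂ => ?_⟩
  let φ := Submodule.orderIsoMapComap e.symm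
  refine h (φ N₁) (φ N₂) (by simpa [φ] using h₁) (by simpa [φ] using h₂) ?_
  rw [← φ.map_inf, h₁₂, φ.map_bot]

theorem IsIndecomposableModule.of_equiv (e : X ≃ₗ[R] Y) (h : IsIndecomposableModule R X) :
    IsIndecomposableModule R Y := by
  obtain ⟨_, h⟩ := h
  refine ⟨e.toEquiv.symm.nontrivial, fun A B hAB => ?_⟩
  let φ := Submodule.orderIsoMapComap e.symm
  simpa [φ] using h (φ A) (φ B) (φ.isCompl hAB)

theorem IsUniformModule.isIndecomposableModule (h : IsUniformModule R X) :
    IsIndecomposableModule R X :=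
  ⟨h.1, fun A B hAB => by
    by_contra! hne
    exact h.2 A B hne.1 hne.2 hAB.inf_eq_bot⟩

theorem not_isUniformModule_of_disjoint {A B : Submodule R X} (hA : A ≠ ⊥) (hB : B ≠ ⊥)
    (hAB : Disjoint A B) : ¬IsUniformModule R X :=
  fun h => h.2 A B hA hB hAB.eq_bot

theorem isUniformModule_submodule_iff {U : Submodule R X} :
    IsUniformModule R U ↔ U ≠ ⊥ ∧ ∀ A ≤ U, ∀ B ≤ U, A ≠ ⊥ → B ≠ ⊥ → A ⊓ B ≠ ⊥ := by
  rw [IsUniformModule, Submodule.nontrivial_iff_ne_bot]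
  refine and_congr_right fun _ => ⟨fun h A hA B hB hA0 hB0 hAB => ?_, fun h A B hA0 hB0 hAB => ?_⟩
  · refine h _ _ (comap_subtype_ne_bot hA hA0) (comap_subtype_ne_bot hB hB0) ?_
    rw [← Submodule.comap_inf, hAB, Submodule.comap_bot, Submodule.ker_subtype]
  · refine h _ (map_subtype_le U A) _ (map_subtype_le U B)
      (map_ne_bot_of_injective U.injective_subtype hA0)
      (map_ne_bot_of_injective U.injective_subtype hB0) ?_
    rw [← Submodule.map_inf _ U.injective_subtype, hAB, Submodule.map_bot]

end Transport

section NoInfiniteDirectSum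

variable {R : Type u} [Ring R] {X : Type v} [AddCommGroup X] [Module R X]

variable (R X) in
def NoInfiniteDirectSum : Prop :=
  ∀ V : ℕ → Submodule R X, iSupIndep V → ∃ n, V n = ⊥

theorem NoInfiniteDirectSum.of_isNoetherian [IsNoetherian R X] : NoInfiniteDirectSum R X :=
  fun V hV => by
    by_contra! h
    exact Set.infinite_univ ((finite_ne_bot_of_iSupIndep hV).subset fun n _ => h n)

theorem NoInfiniteDirectSum.eq_bot_of_disjoint_of_equiv (h : NoInfiniteDirectSum R X)
    {A B : Submodule R X} (hAB : Disjoint A B) (e : X ≃ₗ[R] A) : B = ⊥ := by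
  let f : B × X →ₗ[R] X := B.subtype.coprod (A.subtype ∘ₗ e.toLinearMap)
  have hd : Disjoint (LinearMap.range B.subtype)
      (LinearMap.range (A.subtype ∘ₗ e.toLinearMap)) := by
    rw [range_subtype]
    exact hAB.symm.mono_right ((LinearMap.range_comp_le_range _ _).trans (range_subtype A).le)
  have hf : Function.Injective f := by
    rw [← LinearMap.ker_eq_bot, LinearMap.ker_coprod_of_disjoint_range _ _ hd, ker_subtype,
      LinearMap.ker_eq_bot.2 fun x y hxy => e.injective (A.injective_subtype hxy), prod_bot]
  -- iterating `f` embeds `ℕ →₀ B` into `X`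
  obtain ⟨g, hg⟩ := LinearMap.exists_finsupp_nat_of_prod_injective hf
  obtain ⟨n, hn⟩ := h _ (g.iSupIndep_map hg (iSupIndep_range_lsingle ℕ R B))
  have hn' : LinearMap.range (Finsupp.lsingle n) = ⊥ :=
    map_injective_of_injective hg (hn.trans (map_bot g).symm)
  refine eq_bot_iff.2 fun b hb => ?_
  have := (mem_bot R).1 (hn' ▸ LinearMap.mem_range_self (Finsupp.lsingle n) (⟨b, hb⟩ : B))
  simpa using this

theorem iSupIndep.comap_subtype {ι : Type*} {V : ι → Submodule R X} (hV : iSupIndep V)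
    (E : Submodule R X) : iSupIndep fun i => (V i).comap E.subtype := by
  rw [← iSupIndep_map_orderIso_iff E.mapIic]
  refine iSupIndep.of_coe_Iic_comp (hV.mono fun i => ?_)
  simp only [Function.comp_apply, coe_mapIic_apply, map_comap_subtype, inf_le_right]

theorem NoInfiniteDirectSum.of_isEssentialSubmodule {E : Submodule R X}
    (hE : IsEssentialSubmodule R E) (h : NoInfiniteDirectSum R E) : NoInfiniteDirectSum R X := by
  intro V hV
  obtain ⟨n, hn⟩ := h _ (hV.comap_subtype E)
  exact ⟨n, by_contra fun hVn => hE _ hVn (disjoint_iff_comap_eq_bot.2 hn).eq_bot⟩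

end NoInfiniteDirectSum

section Goldie

variable {R : Type u} [Ring R] {X Y : Type v} [AddCommGroup X] [Module R X]
  [AddCommGroup Y] [Module R Y]

theorem isEssentialIn_of_isUniformModule {W U : Submodule R X} (hU : IsUniformModule R U)
    (hW : ¬Disjoint W U) : IsEssentialIn W U := by
  obtain ⟨-, hU⟩ := isUniformModule_submodule_iff.1 hU
  intro K hK hWK
  by_contra hK0
  refine hU (W ⊓ U) inf_le_right K hK (fun h => hW (disjoint_iff.2 h)) hK0 (le_bot_iff.1 ?_)
  exact (inf_le_inf_right K inf_le_left).trans hWK.le_bot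

theorem isEssentialIn_finset_sup {ι : Type*} {s : Finset ι} {U : ι → Submodule R X}
    (hU : s.SupIndep U) (huni : ∀ i ∈ s, IsUniformModule R (U i)) {W : Submodule R X}
    (hW : ∀ i ∈ s, ¬Disjoint W (U i)) : IsEssentialIn W (s.sup U) := by
  classical
  induction s using Finset.induction_on with
  | empty => exact fun c hc _ => le_bot_iff.1 hc
  | insert i s hi IH =>
    rw [Finset.sup_insert]
    refine (isEssentialIn_of_isUniformModule (huni i (s.mem_insert_self i))
      (hW i (s.mem_insert_self i))).sup ?_ (hU (s.subset_insert i) (s.mem_insert_self i) hi)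
    exact IH (hU.subset (s.subset_insert i)) (fun j hj => huni j (Finset.mem_insert_of_mem hj))
      (fun j hj => hW j (Finset.mem_insert_of_mem hj))

theorem Submodule.map_finsetSup {ι : Type*} (f : X →ₗ[R] Y) (s : Finset ι)
    (V : ι → Submodule R X) : (s.sup V).map f = s.sup fun i => (V i).map f :=
  Finset.apply_sup_eq_sup_comp _ (fun _ _ => map_sup _ _ f) (map_bot f)

theorem Submodule.disjoint_map_mkQ {A B K : Submodule R X} (h : Disjoint A (B ⊔ K)) :
    Disjoint (A.map K.mkQ) (B.map K.mkQ) := by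
  rw [disjoint_def]
  rintro _ ⟨a, ha, rfl⟩ ⟨b, hb, hba⟩
  have hab : a - b ∈ K := (Submodule.Quotient.eq K).1 hba.symm
  have : a ∈ B ⊔ K := by simpa using add_mem (mem_sup_left hb) (mem_sup_right hab)
  simp [disjoint_def.1 h a ha this]

theorem Finset.SupIndep.map_mkQ {ι : Type*} {s : Finset ι} {V : ι → Submodule R X}
    {K : Submodule R X} (hV : s.SupIndep V) (hK : Disjoint (s.sup V) K) :
    s.SupIndep fun i => (V i).map K.mkQ := by
  intro t ht i hi hit
  rw [← map_finsetSup]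
  refine disjoint_map_mkQ ((hV ht hi hit).disjoint_sup_right_of_disjoint_sup_left ?_)
  exact hK.mono_left (sup_le (Finset.le_sup hi) (Finset.sup_mono ht))

theorem IsUniformModule.map_of_disjoint_ker {U : Submodule R X} (hU : IsUniformModule R U)
    {f : X →ₗ[R] Y} (hf : Disjoint U (LinearMap.ker f)) : IsUniformModule R (U.map f) := by
  have hinj : Function.Injective (f.domRestrict U) := by
    rw [← LinearMap.ker_eq_bot, LinearMap.ker_domRestrict, ← disjoint_iff_comap_eq_bot]
    exact hf
  refine hU.of_equiv ((LinearEquiv.ofInjective _ hinj).trans (LinearEquiv.ofEq _ _ ?_))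
  rw [LinearMap.range_domRestrict]

theorem card_le_card_of_le_sup_of_isUniformModule {ι κ : Type*} {s : Finset ι}
    {U : ι → Submodule R X} (hU : s.SupIndep U) (huni : ∀ i ∈ s, IsUniformModule R (U i))
    {t : Finset κ} {V : κ → Submodule R X} (hV : t.SupIndep V) (hV0 : ∀ j ∈ t, V j ≠ ⊥)
    (hVU : ∀ j ∈ t, V j ≤ s.sup U) : t.card ≤ s.card := by
  classical
  induction s using Finset.strongInduction generalizing X t with
  | H s IH =>
  by_contra! hst
  obtain ⟨a, ha⟩ : t.Nonempty := Finset.card_pos.1 (by omega)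
  -- Either some `U i` misses the sum of the `V j`, `j ≠ a`, and we pass to `X ⧸ U i`, or that sum
  -- is essential in `s.sup U` and so meets `V a`.
  by_cases hcase : ∃ i ∈ s, Disjoint ((t.erase a).sup V) (U i)
  · obtain ⟨i, hi, hWi⟩ := hcase
    let q := (U i).mkQ
    have hdisj : Disjoint ((s.erase i).sup U) (U i) :=
      (hU (s.erase_subset i) hi (s.notMem_erase i)).symm
    have hsup : s.sup U = U i ⊔ (s.erase i).sup U := by
      rw [← Finset.sup_insert, Finset.insert_erase hi]
    have key := IH (s.erase i) (s.erase_ssubset hi)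
      ((hU.subset (s.erase_subset i)).map_mkQ hdisj)
      (fun l hl => (huni l (Finset.mem_of_mem_erase hl)).map_of_disjoint_ker
        (by rw [ker_mkQ]; exact hdisj.mono_left (Finset.le_sup hl)))
      ((hV.subset (t.erase_subset a)).map_mkQ hWi)
      (fun j hj (h : (V j).map q = ⊥) => hV0 j (Finset.mem_of_mem_erase hj)
        ((hWi.mono_left (Finset.le_sup hj)).eq_bot_of_le (by rwa [← ker_mkQ (U i),
          LinearMap.le_ker_iff_map])))
      (fun j hj => (map_mono (hVU j (Finset.mem_of_mem_erase hj))).trans_eq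
        (by rw [hsup, Submodule.map_sup, mkQ_map_self, bot_sup_eq, map_finsetSup]))
    rw [Finset.card_erase_of_mem ha, Finset.card_erase_of_mem hi] at key
    have := Finset.card_pos.2 ⟨i, hi⟩
    omega
  · exact hV0 a ha (isEssentialIn_finset_sup hU huni (fun i hi h => hcase ⟨i, hi, h⟩) _
      (hVU a ha) (hV (t.erase_subset a) ha (t.notMem_erase a)).symm)

end Goldie

section Decomposition

variable {R : Type u} [Ring R] {X Y : Type v} [AddCommGroup X] [Module R X]
  [AddCommGroup Y] [Module R Y]

variable (R X) in
def HasIndecomposableDecomposition : Prop :=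
  ∃ (ι : Type v) (_ : DecidableEq ι) (N : ι → Submodule R X),
    DirectSum.IsInternal N ∧ ∀ i, IsIndecomposableModule R (N i)

theorem HasIndecomposableDecomposition.of_equiv (e : X ≃ₗ[R] Y)
    (h : HasIndecomposableDecomposition R X) : HasIndecomposableDecomposition R Y := by
  obtain ⟨ι, _, N, hN, hNi⟩ := h
  rw [DirectSum.isInternal_submodule_iff_iSupIndep_and_iSup_eq_top] at hN
  refine ⟨ι, inferInstance, fun i => (N i).map e.toLinearMap, ?_,
    fun i => (hNi i).of_equiv ((N i).equivMapOfInjective _ e.injective)⟩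
  rw [DirectSum.isInternal_submodule_iff_iSupIndep_and_iSup_eq_top, ← Submodule.map_iSup, hN.2,
    Submodule.map_top]
  exact ⟨e.toLinearMap.iSupIndep_map e.injective hN.1, e.range⟩

theorem hasIndecomposableDecomposition_sSup {S : Set (Submodule R X)} (hS : sSupIndep S)
    (hSi : ∀ N ∈ S, IsIndecomposableModule R N) :
    HasIndecomposableDecomposition R ↥(sSup S) := by
  classical
  have hint :=
    DirectSum.isInternal_biSup_submodule_of_iSupIndep (A := id) S ((sSupIndep_iff S).1 hS)
  rw [sSup_eq_iSup]
  exact ⟨S, inferInstance, _, hint,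
    fun N => (hSi N N.2).of_equiv (comapSubtypeEquivOfLe (le_biSup id N.2)).symm⟩

theorem IsIndecomposableModule.hasIndecomposableDecomposition
    (h : IsIndecomposableModule R X) : HasIndecomposableDecomposition R X := by
  refine (hasIndecomposableDecomposition_sSup (sSupIndep_singleton ⊤) ?_).of_equiv
    ((LinearEquiv.ofEq _ _ sSup_singleton).trans topEquiv)
  rintro N rfl
  exact h.of_equiv topEquiv.symm

theorem NoInfiniteDirectSum.wellFounded_properSummand (h : NoInfiniteDirectSum R X) :
    WellFounded fun B A : Submodule R X => ∃ C, C ≠ ⊥ ∧ Disjoint B C ∧ B ⊔ C = A := by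
  refine wellFounded_iff_isEmpty_descending_chain.2 ⟨fun ⟨f, hf⟩ => ?_⟩
  choose C hC0 hdisj hsup using hf
  have hanti : Antitone f := antitone_nat_of_succ_le fun n => hsup n ▸ le_sup_left
  obtain ⟨n, hn⟩ := h C (iSupIndep_of_disjoint_of_antitone hanti
    (fun n => hsup n ▸ le_sup_right) fun n => (hdisj n).symm)
  exact hC0 n hn

theorem NoInfiniteDirectSum.exists_sSupIndep_indecomposable (h : NoInfiniteDirectSum R X)
    (A : Submodule R X) : ∃ S : Set (Submodule R X),
      sSupIndep S ∧ sSup S = A ∧ ∀ N ∈ S, IsIndecomposableModule R N := by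
  induction A using h.wellFounded_properSummand.induction with
  | _ A IH =>
  by_cases hA : A = ⊥
  · exact ⟨∅, sSupIndep_empty, by simp [hA], by simp⟩
  by_cases hind : IsIndecomposableModule R A
  · exact ⟨{A}, sSupIndep_singleton A, sSup_singleton, by simpa using hind⟩
  obtain ⟨B, C, hBC, hB, hC⟩ : ∃ B C : Submodule R A, IsCompl B C ∧ B ≠ ⊥ ∧ C ≠ ⊥ := by
    by_contra! hne
    exact hind ⟨nontrivial_iff_ne_bot.2 hA, fun B C hBC => or_iff_not_imp_left.2 (hne B C hBC)⟩
  have hd : Disjoint (B.map A.subtype) (C.map A.subtype) := by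
    rw [disjoint_iff, ← map_inf _ A.injective_subtype, hBC.inf_eq_bot, Submodule.map_bot]
  have hs : B.map A.subtype ⊔ C.map A.subtype = A := by
    rw [← Submodule.map_sup, hBC.sup_eq_top, map_subtype_top]
  obtain ⟨S, hS, hSB, hSi⟩ := IH _ ⟨_, map_ne_bot_of_injective A.injective_subtype hC, hd, hs⟩
  obtain ⟨T, hT, hTC, hTi⟩ := IH _ ⟨_, map_ne_bot_of_injective A.injective_subtype hB, hd.symm,
    (sup_comm _ _).trans hs⟩
  refine ⟨S ∪ T, hS.union hT (hSB ▸ hTC ▸ hd), by rw [sSup_union, hSB, hTC, hs], ?_⟩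
  rintro N (hN | hN)
  exacts [hSi N hN, hTi N hN]

theorem NoInfiniteDirectSum.hasIndecomposableDecomposition (h : NoInfiniteDirectSum R X) :
    HasIndecomposableDecomposition R X := by
  obtain ⟨S, hS, hsup, hSi⟩ := h.exists_sSupIndep_indecomposable ⊤
  exact (hasIndecomposableDecomposition_sSup hS hSi).of_equiv
    ((LinearEquiv.ofEq _ _ hsup).trans topEquiv)

end Decomposition

section Zeta

variable {R : Type u} [Ring R] {X Y : Type v} [AddCommGroup X] [Module R X]
  [AddCommGroup Y] [Module R Y]

theorem ModuleZeta.of_equiv {α : Ordinal.{v}} (e : X ≃ₗ[R] Y) (h : ModuleZeta R α X) :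
    ModuleZeta R α Y := by
  induction α using WellFoundedLT.induction generalizing X Y with
  | _ α IH =>
  rw [ModuleZeta] at h ⊢
  rcases h with ⟨rfl, hu⟩ | ⟨hα, hX⟩
  · exact Or.inl ⟨rfl, hu.of_equiv e⟩
  refine Or.inr ⟨hα, fun N hN hNY => ?_⟩
  let eN := e.symm.submoduleMap N
  obtain ⟨β, hβ, hζ⟩ := hX (N.map e.symm.toLinearMap) (by simpa using hN)
    fun ⟨g⟩ => hNY ⟨(eN.trans g).trans e⟩
  exact ⟨β, hβ, IH β hβ eN.symm hζ⟩

theorem ModuleZeta.exists_le_of_submodule {α : Ordinal.{v}} (h : ModuleZeta R α X)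
    {N : Submodule R X} (hN : N ≠ ⊥) : ∃ β ≤ α, ModuleZeta R β N := by
  have hζ := h
  rw [ModuleZeta] at h
  rcases h with ⟨rfl, -, hu⟩ | ⟨-, hX⟩
  · refine ⟨1, le_rfl, ?_⟩
    rw [ModuleZeta]
    refine Or.inl ⟨rfl, isUniformModule_submodule_iff.2 ⟨hN, fun A _ B _ hA hB => hu A B hA hB⟩⟩
  by_cases hNX : Nonempty (N ≃ₗ[R] X)
  · exact ⟨α, le_rfl, hζ.of_equiv hNX.some.symm⟩
  obtain ⟨β, hβ, hζN⟩ := hX N hN hNX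
  exact ⟨β, hβ.le, hζN⟩

theorem moduleZeta_cuDim [Nontrivial X] (h : HasCUDim R X) : ModuleZeta R (cuDim R X) X := by
  rw [cuDim, if_neg (not_subsingleton X)]
  exact csInf_mem h

theorem cuDim_le {α : Ordinal.{v}} (h : ModuleZeta R α X) : cuDim R X ≤ α := by
  rw [cuDim]
  split_ifs
  · exact zero_le
  · exact csInf_le' h

theorem cuDim_congr (e : X ≃ₗ[R] Y) : cuDim R X = cuDim R Y := by
  have hset : {α | ModuleZeta R α X} = {α | ModuleZeta R α Y} :=
    Set.ext fun α => ⟨(·.of_equiv e), (·.of_equiv e.symm)⟩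
  by_cases hX : Subsingleton X
  · have : Subsingleton Y := e.symm.subsingleton
    simp only [cuDim, if_pos hX, if_pos this]
  · have : ¬Subsingleton Y := fun _ => hX e.subsingleton
    simp only [cuDim, if_neg hX, if_neg this, hset]

theorem HasCUDim.submodule (h : HasCUDim R X) {N : Submodule R X} (hN : N ≠ ⊥) :
    HasCUDim R N ∧ cuDim R N ≤ cuDim R X := by
  obtain ⟨x, -, hx⟩ := exists_mem_ne_zero_of_ne_bot hN
  have : Nontrivial X := nontrivial_of_ne x 0 hx
  obtain ⟨β, hβ, hζ⟩ := (moduleZeta_cuDim h).exists_le_of_submodule hN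
  exact ⟨⟨β, hζ⟩, (cuDim_le hζ).trans hβ⟩

end Zeta

section UniformSubmodules

variable {R : Type u} [Ring R] {X : Type v} [AddCommGroup X] [Module R X]

theorem isNoetherian_of_forall_equiv [Nontrivial X]
    (h : ∀ N : Submodule R X, N ≠ ⊥ → Nonempty (N ≃ₗ[R] X)) : IsNoetherian R X := by
  obtain ⟨x, hx⟩ := exists_ne (0 : X)
  have : Module.Finite R X := Module.Finite.equiv (h (R ∙ x) (by simpa using hx)).some
  refine ⟨fun N => ?_⟩
  rcases eq_or_ne N ⊥ with rfl | hN
  · exact fg_bot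
  · have : Module.Finite R N := Module.Finite.equiv (h N hN).some.symm
    exact Module.Finite.iff_fg.1 this

theorem exists_isUniformModule_of_moduleZeta [Nontrivial X] {α : Ordinal.{v}}
    (h : ModuleZeta R α X) : ∃ U : Submodule R X, IsUniformModule R U := by
  induction α using WellFoundedLT.induction generalizing X with
  | _ α IH =>
  by_cases hu : IsUniformModule R X
  · exact ⟨⊤, hu.of_equiv topEquiv.symm⟩
  rw [ModuleZeta] at h
  rcases h with ⟨-, hu'⟩ | ⟨-, hX⟩
  · exact absurd hu' hu
  obtain ⟨N, hN, hNX⟩ : ∃ N : Submodule R X, N ≠ ⊥ ∧ ¬Nonempty (N ≃ₗ[R] X) := by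
    -- otherwise `X` is cyclic, hence Noetherian, yet isomorphic to `N₁` with `N₁ ⊓ N₂ = ⊥`
    by_contra! hall
    have := isNoetherian_of_forall_equiv hall
    obtain ⟨N₁, N₂, h₁, h₂, h₁₂⟩ : ∃ N₁ N₂ : Submodule R X, N₁ ≠ ⊥ ∧ N₂ ≠ ⊥ ∧ N₁ ⊓ N₂ = ⊥ := by
      by_contra! h
      exact hu ⟨inferInstance, h⟩
    exact h₂ (NoInfiniteDirectSum.of_isNoetherian.eq_bot_of_disjoint_of_equiv
      (disjoint_iff.2 h₁₂) (hall N₁ h₁).some.symm)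
  obtain ⟨β, hβ, hζ⟩ := hX N hN hNX
  have : Nontrivial N := nontrivial_iff_ne_bot.2 hN
  obtain ⟨U, hU⟩ := IH β hβ hζ
  exact ⟨U.map N.subtype, hU.of_equiv (U.equivMapOfInjective _ N.injective_subtype)⟩

theorem HasCUDim.exists_isUniformModule_le (h : HasCUDim R X) {K : Submodule R X}
    (hK : K ≠ ⊥) : ∃ U ≤ K, IsUniformModule R U := by
  obtain ⟨⟨β, hζ⟩, -⟩ := h.submodule hK
  have : Nontrivial K := nontrivial_iff_ne_bot.2 hK
  obtain ⟨U, hU⟩ := exists_isUniformModule_of_moduleZeta hζ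
  exact ⟨U.map K.subtype, map_subtype_le _ _,
    hU.of_equiv (U.equivMapOfInjective _ K.injective_subtype)⟩

theorem HasCUDim.exists_sSupIndep_isUniformModule (h : HasCUDim R X) :
    ∃ S : Set (Submodule R X), sSupIndep S ∧ (∀ U ∈ S, IsUniformModule R U) ∧
      IsEssentialSubmodule R (sSup S) := by
  obtain ⟨S, ⟨hS, hSu⟩, hmax⟩ := zorn_subset
    {S : Set (Submodule R X) | sSupIndep S ∧ ∀ U ∈ S, IsUniformModule R U}
    fun c hc hchain => ⟨⋃₀ c, ⟨iSupIndep_sUnion_of_directed hchain.directedOn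
      (fun S hS => (hc hS).1), fun U ⟨S, hS, hU⟩ => (hc hS).2 U hU⟩,
      fun _ => Set.subset_sUnion_of_mem⟩
  refine ⟨S, hS, hSu, fun K hK hSK => ?_⟩
  obtain ⟨U, hUK, hU⟩ := h.exists_isUniformModule_le hK
  have hSU : Disjoint (sSup S) U := (disjoint_iff.2 hSK).mono_right hUK
  have hUS : U ∈ S := by
    refine hmax ⟨?_, ?_⟩ (Set.subset_insert U S) (Set.mem_insert U S)
    · rw [Set.insert_eq]
      exact (sSupIndep_singleton U).union hS (by rwa [sSup_singleton, disjoint_comm])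
    · rintro V (rfl | hV)
      exacts [hU, hSu V hV]
  exact (isUniformModule_submodule_iff.1 hU).1 (hSU.eq_bot_of_ge (le_sSup hUS))

end UniformSubmodules

section FiniteCUDim

variable {R : Type u} [Ring R] {X : Type v} [AddCommGroup X] [Module R X]

theorem HasCUDim.cuDim_lt_of_not_equiv (h : HasCUDim R X) (hX : ¬IsUniformModule R X)
    {N : Submodule R X} (hN : N ≠ ⊥) (hNX : ¬Nonempty (N ≃ₗ[R] X)) :
    HasCUDim R N ∧ cuDim R N < cuDim R X := by
  obtain ⟨x, -, hx⟩ := exists_mem_ne_zero_of_ne_bot hN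
  have : Nontrivial X := nontrivial_of_ne x 0 hx
  have hζ := moduleZeta_cuDim h
  rw [ModuleZeta] at hζ
  rcases hζ with ⟨-, hu⟩ | ⟨-, hall⟩
  · exact absurd hu hX
  obtain ⟨β, hβ, hζN⟩ := hall N hN hNX
  exact ⟨⟨β, hζN⟩, (cuDim_le hζN).trans_lt hβ⟩

theorem HasCUDim.exists_equiv_succ (h : HasCUDim R X) (hω : cuDim R X < Ordinal.omega0)
    {F : ℕ → Submodule R X} (hF : Monotone F) (hF0 : F 0 ≠ ⊥)
    (hFu : ∀ j, ¬IsUniformModule R (F (j + 1))) : ∃ j, Nonempty (F j ≃ₗ[R] F (j + 1)) := by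
  by_contra hne
  have hFne : ∀ j, F j ≠ ⊥ := fun j hj => hF0 (le_bot_iff.1 (hj ▸ hF (Nat.zero_le j)))
  have hlt : ∀ j, cuDim R (F j) < cuDim R (F (j + 1)) := by
    intro j
    let eA := comapSubtypeEquivOfLe (hF j.le_succ)
    have := ((h.submodule (hFne (j + 1))).1.cuDim_lt_of_not_equiv (hFu j)
      (comap_subtype_ne_bot (hF j.le_succ) (hFne j)) fun ⟨e⟩ => hne ⟨j, ⟨eA.symm.trans e⟩⟩).2
    rwa [cuDim_congr eA] at this
  have hle : ∀ j : ℕ, (j : Ordinal) ≤ cuDim R (F j) := by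
    intro j
    induction j with
    | zero => simp
    | succ j ih => exact_mod_cast Order.add_one_le_of_lt (ih.trans_lt (hlt j))
  obtain ⟨n, hn⟩ := Ordinal.lt_omega0.1 hω
  have := (hle (n + 1)).trans ((h.submodule (hFne (n + 1))).2.trans_eq hn)
  norm_cast at this
  omega

theorem HasCUDim.noInfiniteDirectSum (h : HasCUDim R X) (hω : cuDim R X < Ordinal.omega0) :
    NoInfiniteDirectSum R X := by
  generalize hc : cuDim R X = o at hω
  induction o using WellFoundedLT.induction generalizing X with
  | _ o IH =>
  intro V hV
  by_contra! hV0
  choose u hu huni using fun n => h.exists_isUniformModule_le (hV0 n)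
  have hui : iSupIndep u := hV.mono hu
  have hu0 : ∀ n, u n ≠ ⊥ := fun n => (isUniformModule_submodule_iff.1 (huni n)).1
  let F := partialSups u
  have hFne : ∀ j, F j ≠ ⊥ := fun j hj =>
    hu0 0 (le_bot_iff.1 (hj ▸ le_partialSups_of_le u (Nat.zero_le j)))
  have hFu : ∀ j, Disjoint (F j) (u (j + 1)) := fun j => by
    rw [partialSups_eq_biSup]
    exact (hui.disjoint_biSup (y := Set.Iic j) (by simp)).symm
  have hX : ¬IsUniformModule R X :=
    not_isUniformModule_of_disjoint (hFne 0) (hu0 1) (hFu 0)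
  obtain ⟨j, ⟨g⟩⟩ := h.exists_equiv_succ (hc ▸ hω) (partialSups_monotone u) (hFne 0) fun j hU =>
    (isUniformModule_submodule_iff.1 hU).2 (F j) (partialSups_monotone u j.le_succ) (u (j + 1))
      (le_partialSups u (j + 1)) (hFne j) (hu0 (j + 1)) (hFu j).eq_bot
  -- `P` is isomorphic to its proper summand `F j`: if `P ≅ X`, count uniform submodules;
  -- otherwise `P` has smaller `cuDim`, so induction applies to it.
  let P := F (j + 1)
  by_cases hPX : Nonempty (X ≃ₗ[R] P)
  · obtain ⟨e⟩ := hPX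
    let f := P.subtype ∘ₗ e.toLinearMap
    have hf : Function.Injective f := P.injective_subtype.comp e.injective
    have := card_le_card_of_le_sup_of_isUniformModule (hui.supIndep' (Finset.range (j + 2)))
      (fun i _ => huni i) ((f.iSupIndep_map hf hui).supIndep' (Finset.range (j + 3)))
      (fun i _ => map_ne_bot_of_injective hf (hu0 i)) fun i _ => LinearMap.map_le_range.trans ?_
    · simp at this
    · rw [← partialSups_eq_sup_range]
      exact (LinearMap.range_comp_le_range _ _).trans (range_subtype P).le
  · obtain ⟨hP, hPlt⟩ := h.cuDim_lt_of_not_equiv hX (hFne (j + 1)) fun ⟨e⟩ => hPX ⟨e.symm⟩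
    have hPfin := IH _ (hc ▸ hPlt) hP rfl (hPlt.trans_le hc.le |>.trans hω)
    refine comap_subtype_ne_bot (le_partialSups u (j + 1)) (hu0 (j + 1)) <|
      hPfin.eq_bot_of_disjoint_of_equiv (A := (F j).comap P.subtype) ?_
        (g.symm.trans (comapSubtypeEquivOfLe (partialSups_monotone u j.le_succ)).symm)
    rw [disjoint_iff, ← comap_inf, (hFu j).eq_bot, comap_bot, ker_subtype]

end FiniteCUDim


/-- A nonzero module of couniserial dimension at most `ω` is a direct sum of
indecomposable submodules. -/
theorem stmt10 (R : Type u) [Ring R] (M : Type v) [AddCommGroup M] [Module R M] [Nontrivial M]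
    (h : HasCUDim R M) (hω : cuDim R M ≤ Ordinal.omega0.{v}) :
    ∃ (ι : Type v) (_ : DecidableEq ι) (N : ι → Submodule R M),
      DirectSum.IsInternal N ∧ ∀ i, IsIndecomposableModule R (N i) := by
  by_cases hu : IsUniformModule R M
  · exact hu.isIndecomposableModule.hasIndecomposableDecomposition
  obtain ⟨S, hS, hSu, hSess⟩ := h.exists_sSupIndep_isUniformModule
  by_cases hSM : Nonempty (↥(sSup S) ≃ₗ[R] M)
  · exact (hasIndecomposableDecomposition_sSup hS fun U hU =>
      (hSu U hU).isIndecomposableModule).of_equiv hSM.some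
  have hS0 : sSup S ≠ ⊥ := by simpa using hSess ⊤ top_ne_bot
  obtain ⟨hScu, hSlt⟩ := h.cuDim_lt_of_not_equiv hu hS0 hSM
  exact ((hScu.noInfiniteDirectSum (hSlt.trans_le hω)).of_isEssentialSubmodule
    hSess).hasIndecomposableDecomposition
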